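/- Let N₁, ..., N_s be C¹ submanifold germs of ℝ^n at the origin as graphs over their pairwise transverse tangent spaces T_j (meaning T_j ∩ T_k = {0} for all j ≠ k) of C¹ maps G_j with G_j(0) = 0 and DG_j(0) = 0, and assume the union Y = N₁ ∪ … ∪ N_s has an isolated singularity at 0. Then Y is locally LNE at 0: there exists r > 0 such that Y ∩ closed-ball(0,r) is LNE. -/

import Mathlib

/-!
Write `P c = c + G c`. Near `0` each `G j` is `ε`-Lipschitz, so `P` is bi-Lipschitz, and since `G`
takes values orthogonal to `T`, `‖P (t • a)‖² ≤ ‖P a‖² - (1 - t) ‖a‖² / 2` for `a ∈ T`. Hence the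
part of a sheet in the closed `ρ`-ball is the `P`-image of a set `A ⊆ T` that is star-shaped about
`0` with a margin: the `(1 - t) ‖a‖ / 8`-neighbourhood of `t • a` in `T` stays in `A`. Such a set
is LNE: join `a` to `b` through `t • a` and `t • b`, with `1 - t` proportional to
`‖a - b‖ / max ‖a‖ ‖b‖`. Points on different sheets are joined through the origin, and
transversality of the `T j` gives `‖x‖ + ‖y‖ ≤ C ‖x - y‖` for them.
-/

open Set Metric
open scoped NNReal ENNReal Topology

/-- Length of a path `γ` parametrized by `[0,1]`, as the total variation on `[0,1]`. -/
noncomputable def pathLength {M : Type*} [PseudoEMetricSpace M] (γ : ℝ → M) : ENNReal :=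
  eVariationOn γ (Set.Icc 0 1)

/-- Inner distance in a subset `S`: infimum of lengths of continuous paths in `S`
joining `x` and `y` (it is `∞` if there is no such path). -/
noncomputable def innerDist {M : Type*} [PseudoEMetricSpace M] (S : Set M) (x y : M) : ENNReal :=
  sInf {l : ENNReal | ∃ γ : ℝ → M, ContinuousOn γ (Set.Icc 0 1) ∧
    Set.MapsTo γ (Set.Icc 0 1) S ∧ γ 0 = x ∧ γ 1 = y ∧ l = pathLength γ}

/-- `S` is Lipschitz normally embedded with constant `L`. -/
def IsLNEWith {M : Type*} [PseudoMetricSpace M] (L : ℝ) (S : Set M) : Prop :=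
  ∀ ⦃x⦄, x ∈ S → ∀ ⦃y⦄, y ∈ S → innerDist S x y ≤ ENNReal.ofReal (L * dist x y)

/-- `S` is Lipschitz normally embedded. -/
def IsLNE {M : Type*} [PseudoMetricSpace M] (S : Set M) : Prop :=
  ∃ L : ℝ, 1 ≤ L ∧ IsLNEWith L S

section PathConcat

variable {M : Type*}

noncomputable def pathConcat (γ₁ γ₂ : ℝ → M) : ℝ → M :=
  fun u => if u ≤ 1 / 2 then γ₁ (2 * u) else γ₂ (2 * u - 1)

lemma pathConcat_eqOn_left (γ₁ γ₂ : ℝ → M) :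
    EqOn (pathConcat γ₁ γ₂) (γ₁ ∘ (2 * ·)) (Icc 0 (1 / 2)) :=
  fun _ hu => if_pos hu.2

lemma pathConcat_eqOn_right {γ₁ γ₂ : ℝ → M} (h : γ₁ 1 = γ₂ 0) :
    EqOn (pathConcat γ₁ γ₂) (γ₂ ∘ (2 * · + (-1))) (Icc (1 / 2) 1) := by
  intro u hu
  rcases hu.1.eq_or_lt with rfl | hu'
  · simp [pathConcat, h]
  · simp only [pathConcat, Function.comp, if_neg (not_le.2 hu'), sub_eq_add_neg]

lemma pathConcat_zero {γ₁ γ₂ : ℝ → M} : pathConcat γ₁ γ₂ 0 = γ₁ 0 := by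
  simp [pathConcat]

lemma pathConcat_one {γ₁ γ₂ : ℝ → M} : pathConcat γ₁ γ₂ 1 = γ₂ 1 := by
  norm_num [pathConcat]

lemma image_two_mul_Icc : (2 * ·) '' Icc (0 : ℝ) (1 / 2) = Icc 0 1 := by
  rw [image_mul_left_Icc' two_pos]; norm_num

lemma image_two_mul_sub_one_Icc : (2 * · + (-1)) '' Icc (1 / 2 : ℝ) 1 = Icc 0 1 := by
  rw [image_affine_Icc' two_pos]; norm_num

lemma Icc_zero_one_eq_union_half : Icc (0 : ℝ) 1 = Icc 0 (1 / 2) ∪ Icc (1 / 2) 1 :=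
  (Icc_union_Icc_eq_Icc (by norm_num) (by norm_num)).symm

lemma MapsTo.pathConcat {γ₁ γ₂ : ℝ → M} {S : Set M} (hγ₁ : MapsTo γ₁ (Icc 0 1) S)
    (hγ₂ : MapsTo γ₂ (Icc 0 1) S) (h : γ₁ 1 = γ₂ 0) :
    MapsTo (pathConcat γ₁ γ₂) (Icc 0 1) S := by
  rw [Icc_zero_one_eq_union_half, ← union_self S]
  refine MapsTo.union_union ?_ ?_
  · refine MapsTo.congr ?_ (pathConcat_eqOn_left γ₁ γ₂).symm
    exact hγ₁.comp (image_two_mul_Icc ▸ mapsTo_image _ _)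
  · refine MapsTo.congr ?_ (pathConcat_eqOn_right h).symm
    exact hγ₂.comp (image_two_mul_sub_one_Icc ▸ mapsTo_image _ _)

variable [TopologicalSpace M]

lemma ContinuousOn.pathConcat {γ₁ γ₂ : ℝ → M} (hγ₁ : ContinuousOn γ₁ (Icc 0 1))
    (hγ₂ : ContinuousOn γ₂ (Icc 0 1)) (h : γ₁ 1 = γ₂ 0) :
    ContinuousOn (pathConcat γ₁ γ₂) (Icc 0 1) := by
  rw [Icc_zero_one_eq_union_half]
  refine ContinuousOn.union_of_isClosed ?_ ?_ isClosed_Icc isClosed_Icc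
  · refine ContinuousOn.congr ?_ (pathConcat_eqOn_left γ₁ γ₂)
    exact hγ₁.comp (by fun_prop) (image_two_mul_Icc ▸ mapsTo_image _ _)
  · refine ContinuousOn.congr ?_ (pathConcat_eqOn_right h)
    exact hγ₂.comp (by fun_prop) (image_two_mul_sub_one_Icc ▸ mapsTo_image _ _)

end PathConcat

section InnerDist

variable {M : Type*} [PseudoEMetricSpace M] {S S' : Set M} {x y : M}

lemma innerDist_le_pathLength {γ : ℝ → M} (hγ : ContinuousOn γ (Icc 0 1))
    (hγS : MapsTo γ (Icc 0 1) S) (h0 : γ 0 = x) (h1 : γ 1 = y) :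
    innerDist S x y ≤ pathLength γ :=
  sInf_le ⟨γ, hγ, hγS, h0, h1, rfl⟩

lemma innerDist_mono (h : S ⊆ S') : innerDist S' x y ≤ innerDist S x y :=
  sInf_le_sInf fun _ ⟨γ, hγ, hγS, h0, h1, hl⟩ => ⟨γ, hγ, hγS.mono_right h, h0, h1, hl⟩

lemma pathLength_le_of_lipschitzOnWith {γ : ℝ → M} {K : ℝ≥0}
    (hγ : LipschitzOnWith K γ (Icc 0 1)) : pathLength γ ≤ K := by
  calc pathLength γ = eVariationOn (γ ∘ id) (Icc 0 1) := rfl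
    _ ≤ K * eVariationOn id (Icc 0 1) := hγ.comp_eVariationOn_le (mapsTo_id _)
    _ ≤ K := by simp

lemma innerDist_le_of_lipschitzOnWith {γ : ℝ → M} {K : ℝ≥0}
    (hγ : LipschitzOnWith K γ (Icc 0 1)) (hγS : MapsTo γ (Icc 0 1) S) (h0 : γ 0 = x)
    (h1 : γ 1 = y) : innerDist S x y ≤ K :=
  (innerDist_le_pathLength hγ.continuousOn hγS h0 h1).trans
    (pathLength_le_of_lipschitzOnWith hγ)

lemma pathLength_pathConcat {γ₁ γ₂ : ℝ → M} (h : γ₁ 1 = γ₂ 0) :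
    pathLength (pathConcat γ₁ γ₂) = pathLength γ₁ + pathLength γ₂ := by
  have hmono₁ : Monotone (2 * · : ℝ → ℝ) := (strictMono_mul_left_of_pos two_pos).monotone
  rw [pathLength, ← univ_inter (Icc _ _),
    ← eVariationOn.Icc_add_Icc _ (by norm_num) (by norm_num) (mem_univ (1 / 2 : ℝ)), univ_inter,
    univ_inter,
    eVariationOn.eq_of_eqOn (pathConcat_eqOn_left γ₁ γ₂),
    eVariationOn.eq_of_eqOn (pathConcat_eqOn_right h),
    eVariationOn.comp_eq_of_monotoneOn _ _ (hmono₁.monotoneOn _),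
    eVariationOn.comp_eq_of_monotoneOn _ _ ((hmono₁.add_const _).monotoneOn _),
    image_two_mul_Icc, image_two_mul_sub_one_Icc, pathLength, pathLength]

lemma innerDist_triangle (S : Set M) (x y z : M) :
    innerDist S x z ≤ innerDist S x y + innerDist S y z := by
  simp only [innerDist, sInf_eq_iInf']
  refine ENNReal.le_iInf_add_iInf fun ⟨l₁, γ₁, hc₁, hm₁, h₁0, h₁1, hl₁⟩
    ⟨l₂, γ₂, hc₂, hm₂, h₂0, h₂1, hl₂⟩ => ?_
  have hγ : γ₁ 1 = γ₂ 0 := h₁1.trans h₂0.symm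
  refine (iInf_le _ ⟨_, pathConcat γ₁ γ₂, hc₁.pathConcat hc₂ hγ, MapsTo.pathConcat hm₁ hm₂ hγ,
    pathConcat_zero.trans h₁0, pathConcat_one.trans h₂1, rfl⟩).trans_eq ?_
  show pathLength (pathConcat γ₁ γ₂) = l₁ + l₂
  rw [pathLength_pathConcat hγ, hl₁, hl₂]

end InnerDist

section InnerDistNormed

variable {E : Type*} [NormedAddCommGroup E] [NormedSpace ℝ E] {S : Set E} {x y : E}

lemma innerDist_le_of_segment_subset (h : segment ℝ x y ⊆ S) : innerDist S x y ≤ edist x y := by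
  rw [edist_nndist]
  refine innerDist_le_of_lipschitzOnWith ((lipschitzWith_lineMap x y).lipschitzOnWith) ?_
    (AffineMap.lineMap_apply_zero x y) (AffineMap.lineMap_apply_one x y)
  rw [segment_eq_image_lineMap] at h
  exact fun u hu => h (mem_image_of_mem _ hu)

end InnerDistNormed

section Image

variable {M N : Type*} [PseudoMetricSpace M] [PseudoMetricSpace N]

-- `K ≠ 0` excludes `0 * ∞ = 0` when `A` contains no path from `x` to `y`.
lemma innerDist_image_le {A : Set N} {S : Set M} {f : N → M} {K : ℝ≥0} (hK : K ≠ 0)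
    (hf : LipschitzOnWith K f A) (hfA : MapsTo f A S) (x y : N) :
    innerDist S (f x) (f y) ≤ K * innerDist A x y := by
  unfold innerDist
  rw [Monotone.map_sInf_of_continuousAt (f := ((K : ℝ≥0∞) * ·))
    (ENNReal.continuous_const_mul ENNReal.coe_ne_top).continuousAt
    (fun _ _ h => mul_le_mul_right h _) (ENNReal.mul_top (by exact_mod_cast hK))]
  refine le_sInf ?_
  rintro _ ⟨_, ⟨γ, hγ, hγA, h0, h1, rfl⟩, rfl⟩
  refine (innerDist_le_pathLength (hf.continuousOn.comp hγ hγA) (hfA.comp hγA)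
    (by simp [h0]) (by simp [h1])).trans ?_
  exact hf.comp_eVariationOn_le hγA

lemma IsLNEWith.image {A : Set N} {f : N → M} {K : ℝ≥0} {L K' : ℝ} (hA : IsLNEWith L A)
    (hL : 0 ≤ L) (hK : K ≠ 0) (hf : LipschitzOnWith K f A)
    (hf' : ∀ x ∈ A, ∀ y ∈ A, dist x y ≤ K' * dist (f x) (f y)) :
    IsLNEWith (K * L * K') (f '' A) := by
  rintro _ ⟨x, hx, rfl⟩ _ ⟨y, hy, rfl⟩
  calc innerDist (f '' A) (f x) (f y) ≤ K * innerDist A x y :=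
        innerDist_image_le hK hf (mapsTo_image f A) x y
    _ ≤ K * ENNReal.ofReal (L * dist x y) := by gcongr; exact hA hx hy
    _ ≤ K * ENNReal.ofReal (L * (K' * dist (f x) (f y))) := by
        gcongr; exact hf' x hx y hy
    _ = ENNReal.ofReal (K * L * K' * dist (f x) (f y)) := by
        rw [← ENNReal.ofReal_coe_nnreal, ← ENNReal.ofReal_mul K.coe_nonneg]; ring_nf

end Image

section MarginStarShaped

variable {E : Type*} [NormedAddCommGroup E] [NormedSpace ℝ E]

def IsMarginStarShaped (T : Submodule ℝ E) (κ : ℝ) (A : Set E) : Prop :=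
  A ⊆ T ∧ ∀ a ∈ A, ∀ t ∈ Icc (0 : ℝ) 1, ∀ c ∈ T, ‖c - t • a‖ ≤ κ * (1 - t) * ‖a‖ → c ∈ A

variable {T : Submodule ℝ E} {κ : ℝ} {A : Set E} {a b : E} {t : ℝ}

lemma IsMarginStarShaped.smul_mem (hA : IsMarginStarShaped T κ A) (hκ : 0 ≤ κ) (ha : a ∈ A)
    (ht : t ∈ Icc (0 : ℝ) 1) : t • a ∈ A :=
  hA.2 a ha t ht _ (T.smul_mem t (hA.1 ha)) <| by
    rw [sub_self, norm_zero]
    exact mul_nonneg (mul_nonneg hκ (sub_nonneg.2 ht.2)) (norm_nonneg a)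

lemma IsMarginStarShaped.segment_smul_subset (hA : IsMarginStarShaped T κ A) (hκ : 0 ≤ κ)
    (ha : a ∈ A) (ht : t ∈ Icc (0 : ℝ) 1) : segment ℝ a (t • a) ⊆ A := by
  have hstar : StarConvex ℝ 0 A :=
    starConvex_zero_iff.2 fun _ hc _ h0 h1 => hA.smul_mem hκ hc ⟨h0, h1⟩
  have hta : t • a ∈ segment ℝ 0 a := by
    simpa [AffineMap.lineMap_apply_module] using lineMap_mem_segment ℝ (0 : E) a ht
  exact ((convex_segment 0 a).segment_subset (right_mem_segment ℝ 0 a) hta).trans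
    (hstar.segment_subset ha)

lemma IsMarginStarShaped.segment_smul_smul_subset (hA : IsMarginStarShaped T κ A) (ha : a ∈ A)
    (hb : b ∈ A) (ht : t ∈ Icc (0 : ℝ) 1)
    (hmargin : t * ‖a - b‖ ≤ κ * (1 - t) * max ‖a‖ ‖b‖) :
    segment ℝ (t • a) (t • b) ⊆ A := by
  intro c hc
  have hcT : c ∈ T :=
    T.convex.segment_subset (T.smul_mem t (hA.1 ha)) (T.smul_mem t (hA.1 hb)) hc
  have hdist : ‖t • a - t • b‖ = t * ‖a - b‖ := by
    rw [← smul_sub, norm_smul, Real.norm_of_nonneg ht.1]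
  rcases le_total ‖a‖ ‖b‖ with hab | hab
  · refine hA.2 b hb t ht c hcT ?_
    rw [max_eq_right hab] at hmargin
    rw [segment_symm] at hc
    exact (norm_sub_le_of_mem_segment hc).trans (hdist.trans_le hmargin)
  · refine hA.2 a ha t ht c hcT ?_
    rw [max_eq_left hab] at hmargin
    exact (norm_sub_le_of_mem_segment hc).trans
      (((norm_sub_rev _ _).trans hdist).trans_le hmargin)

lemma IsMarginStarShaped.innerDist_le (hA : IsMarginStarShaped T κ A) (hκ : 0 ≤ κ) (ha : a ∈ A)
    (hb : b ∈ A) (ht : t ∈ Icc (0 : ℝ) 1)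
    (hmargin : t * ‖a - b‖ ≤ κ * (1 - t) * max ‖a‖ ‖b‖) :
    innerDist A a b ≤ ENNReal.ofReal ((1 - t) * ‖a‖ + t * ‖a - b‖ + (1 - t) * ‖b‖) := by
  have hleg : ∀ c : E, ‖c - t • c‖ = (1 - t) * ‖c‖ := fun c => by
    rw [show c - t • c = (1 - t) • c by module, norm_smul,
      Real.norm_of_nonneg (sub_nonneg.2 ht.2)]
  have hmid : ‖t • a - t • b‖ = t * ‖a - b‖ := by
    rw [← smul_sub, norm_smul, Real.norm_of_nonneg ht.1]
  calc innerDist A a b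
      ≤ innerDist A a (t • a) + innerDist A (t • a) (t • b) + innerDist A (t • b) b :=
        (innerDist_triangle A a (t • b) b).trans
          (add_le_add_left (innerDist_triangle A a (t • a) (t • b)) _)
    _ ≤ edist a (t • a) + edist (t • a) (t • b) + edist (t • b) b := by
        gcongr
        · exact innerDist_le_of_segment_subset (hA.segment_smul_subset hκ ha ht)
        · exact innerDist_le_of_segment_subset (hA.segment_smul_smul_subset ha hb ht hmargin)
        · exact innerDist_le_of_segment_subset
            (segment_symm ℝ b (t • b) ▸ hA.segment_smul_subset hκ hb ht)
    _ = ENNReal.ofReal ((1 - t) * ‖a‖ + t * ‖a - b‖ + (1 - t) * ‖b‖) := by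
        have h1 : 0 ≤ (1 - t) * ‖a‖ := mul_nonneg (sub_nonneg.2 ht.2) (norm_nonneg _)
        have h2 : 0 ≤ t * ‖a - b‖ := mul_nonneg ht.1 (norm_nonneg _)
        have h3 : 0 ≤ (1 - t) * ‖b‖ := mul_nonneg (sub_nonneg.2 ht.2) (norm_nonneg _)
        rw [edist_dist, edist_dist, edist_dist, dist_eq_norm, dist_eq_norm, dist_comm,
          dist_eq_norm, hleg, hleg, hmid, ← ENNReal.ofReal_add h1 h2,
          ← ENNReal.ofReal_add (add_nonneg h1 h2) h3]

lemma IsMarginStarShaped.isLNEWith (hA : IsMarginStarShaped T κ A) (hκ : 0 < κ) :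
    IsLNEWith (2 / κ + 1) A := by
  intro a ha b hb
  set D := ‖a - b‖
  set R := max ‖a‖ ‖b‖
  have hD : 0 ≤ D := norm_nonneg _
  have hab : ‖a‖ + ‖b‖ ≤ 2 * R := by
    linarith [le_max_left ‖a‖ ‖b‖, le_max_right ‖a‖ ‖b‖]
  rw [dist_eq_norm]
  by_cases hfar : κ * R ≤ D
  · have hmargin : 0 * D ≤ κ * (1 - 0) * R := by rw [zero_mul, sub_zero, mul_one]; positivity
    refine (hA.innerDist_le hκ.le ha hb ⟨le_rfl, zero_le_one⟩ hmargin).trans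
      (ENNReal.ofReal_le_ofReal ?_)
    have : 2 * R ≤ 2 / κ * D := by
      rw [div_mul_eq_mul_div, le_div_iff₀ hκ]; linarith
    linarith
  · push Not at hfar
    have hR : 0 < R := pos_of_mul_pos_right (hD.trans_lt hfar) hκ.le
    obtain ⟨s, hsR, hs0, hs1⟩ : ∃ s, κ * s * R = D ∧ 0 ≤ s ∧ s < 1 :=
      ⟨D / (κ * R), by field_simp, by positivity, (div_lt_one (by positivity)).2 hfar⟩
    refine (hA.innerDist_le hκ.le ha hb (t := 1 - s) ⟨by linarith, by linarith⟩ ?_).trans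
      (ENNReal.ofReal_le_ofReal ?_)
    · rw [sub_sub_cancel, hsR]
      nlinarith [mul_nonneg hs0 hD]
    · have h2sR : 2 * s * R = 2 / κ * D := by rw [← hsR]; field_simp
      rw [sub_sub_cancel]
      nlinarith [mul_le_mul_of_nonneg_left hab hs0, mul_nonneg hs0 hD]

end MarginStarShaped

section LipschitzPerturbation

variable {E F : Type*} [NormedAddCommGroup E] [NormedAddCommGroup F] {ε : ℝ≥0} {δ : ℝ}

lemma LipschitzOnWith.norm_le_of_map_zero {f : E → F} (hf : LipschitzOnWith ε f (ball 0 δ))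
    (hf0 : f 0 = 0) {u : E} (hu : ‖u‖ < δ) : ‖f u‖ ≤ ε * ‖u‖ := by
  simpa [hf0] using hf.norm_sub_le (mem_ball_zero_iff.2 hu)
    (mem_ball_self ((norm_nonneg u).trans_lt hu))

lemma LipschitzOnWith.mul_norm_sub_le_norm_add_sub {G : E → E}
    (hG : LipschitzOnWith ε G (ball 0 δ)) {u v : E} (hu : ‖u‖ < δ) (hv : ‖v‖ < δ) :
    (1 - ε) * ‖u - v‖ ≤ ‖(u + G u) - (v + G v)‖ := by
  have hGuv := hG.norm_sub_le (mem_ball_zero_iff.2 hu) (mem_ball_zero_iff.2 hv)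
  have htri : ‖u - v‖ ≤ ‖(u + G u) - (v + G v)‖ + ‖G u - G v‖ :=
    calc ‖u - v‖ = ‖((u + G u) - (v + G v)) - (G u - G v)‖ := by congr 1; abel
      _ ≤ _ := _root_.norm_sub_le _ _
  linarith

end LipschitzPerturbation

section GraphSheet

variable {E : Type*} [NormedAddCommGroup E] [InnerProductSpace ℝ E] {T : Submodule ℝ E}

lemma norm_add_sq_of_mem_orthogonal {a g : E} (ha : a ∈ T) (hg : g ∈ Tᗮ) :
    ‖a + g‖ ^ 2 = ‖a‖ ^ 2 + ‖g‖ ^ 2 := by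
  simpa only [sq] using
    norm_add_sq_eq_norm_sq_add_norm_sq_real (Submodule.inner_right_of_mem_orthogonal ha hg)

lemma norm_le_norm_add_of_mem_orthogonal {a g : E} (ha : a ∈ T) (hg : g ∈ Tᗮ) :
    ‖a‖ ≤ ‖a + g‖ := by
  refine (sq_le_sq₀ (norm_nonneg _) (norm_nonneg _)).1 ?_
  rw [norm_add_sq_of_mem_orthogonal ha hg]
  exact le_add_of_nonneg_right (sq_nonneg _)

variable {G : E → E} {ε : ℝ≥0} {δ ρ : ℝ}

lemma norm_smul_add_sq_le (hGperp : ∀ c ∈ T, G c ∈ Tᗮ) (hG : LipschitzOnWith ε G (ball 0 δ))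
    (hG0 : G 0 = 0) (hε : (ε : ℝ) ≤ 1 / 4) {a : E} (ha : a ∈ T) (haδ : ‖a‖ < δ) {t : ℝ}
    (ht : t ∈ Icc (0 : ℝ) 1) :
    ‖t • a + G (t • a)‖ ^ 2 ≤ ‖a + G a‖ ^ 2 - (1 - t) * ‖a‖ ^ 2 / 2 := by
  have hta : t • a ∈ T := T.smul_mem t ha
  have hnorm : ‖t • a‖ = t * ‖a‖ := by rw [norm_smul, Real.norm_of_nonneg ht.1]
  have htaδ : ‖t • a‖ < δ := hnorm ▸ (mul_le_of_le_one_left (norm_nonneg a) ht.2).trans_lt haδ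
  have hGa : ‖G a‖ ≤ ε * ‖a‖ := hG.norm_le_of_map_zero hG0 haδ
  have hGta : ‖G (t • a)‖ ≤ ‖G a‖ + ε * ((1 - t) * ‖a‖) := by
    have h := hG.norm_sub_le (mem_ball_zero_iff.2 htaδ) (mem_ball_zero_iff.2 haδ)
    rw [show t • a - a = -((1 - t) • a) by module, norm_neg, norm_smul,
      Real.norm_of_nonneg (sub_nonneg.2 ht.2)] at h
    linarith [norm_le_norm_sub_add (G (t • a)) (G a)]
  rw [norm_add_sq_of_mem_orthogonal hta (hGperp _ hta),
    norm_add_sq_of_mem_orthogonal ha (hGperp a ha), hnorm]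
  have hsq : ‖G (t • a)‖ ^ 2 ≤ (‖G a‖ + ε * ((1 - t) * ‖a‖)) ^ 2 :=
    pow_le_pow_left₀ (norm_nonneg _) hGta 2
  have hμ : 0 ≤ 1 - t := sub_nonneg.2 ht.2
  have hεμA : 0 ≤ (ε : ℝ) * ((1 - t) * ‖a‖) := by positivity
  have hε2 : (ε : ℝ) ^ 2 ≤ 1 / 16 := by nlinarith [ε.coe_nonneg]
  have hμA : 0 ≤ (1 - t) * ‖a‖ ^ 2 := by positivity
  have htμA : 0 ≤ t * ((1 - t) * ‖a‖ ^ 2) := mul_nonneg ht.1 hμA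
  nlinarith [mul_le_mul_of_nonneg_right hGa hεμA, mul_le_mul_of_nonneg_right hε2 hμA,
    mul_nonneg (sq_nonneg (ε : ℝ)) htμA]

lemma isMarginStarShaped_graph (hGperp : ∀ c ∈ T, G c ∈ Tᗮ)
    (hG : LipschitzOnWith ε G (ball 0 δ)) (hG0 : G 0 = 0) (hε : (ε : ℝ) ≤ 1 / 4)
    (hρδ : ρ < δ) :
    IsMarginStarShaped T (1 / 8) {c | c ∈ T ∧ ‖c + G c‖ ≤ ρ} := by
  refine ⟨fun c hc => hc.1, ?_⟩
  rintro a ⟨ha, haρ⟩ t ht c hc hca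
  have hP : LipschitzOnWith (1 + ε) (fun x => x + G x) (ball 0 δ) :=
    LipschitzWith.id.lipschitzOnWith.add hG
  have haρ' : ‖a‖ ≤ ρ := (norm_le_norm_add_of_mem_orthogonal ha (hGperp a ha)).trans haρ
  have hnorm : ‖t • a‖ = t * ‖a‖ := by rw [norm_smul, Real.norm_of_nonneg ht.1]
  have hta : ‖t • a‖ ≤ ‖a‖ := hnorm ▸ mul_le_of_le_one_left (norm_nonneg a) ht.2
  have hca' : ‖c‖ ≤ ‖a‖ := by
    nlinarith [norm_le_norm_sub_add c (t • a), mul_nonneg (sub_nonneg.2 ht.2) (norm_nonneg a)]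
  refine ⟨hc, ?_⟩
  -- For small `a` the bound `‖c + G c‖ ≤ (5/4) ‖c‖` suffices; for large `a` the depth gained by
  -- shrinking exceeds what moving from `t • a` to `c` can lose.
  rcases le_or_gt ‖a‖ (4 / 5 * ρ) with hsmall | hlarge
  · have := hP.norm_le_of_map_zero (by simp [hG0]) (hca'.trans_lt (haρ'.trans_lt hρδ))
    push_cast at this
    nlinarith [norm_nonneg c]
  · have hdepth := norm_smul_add_sq_le hGperp hG hG0 hε ha (haρ'.trans_lt hρδ) ht
    have hPc := hP.norm_sub_le (mem_ball_zero_iff.2 (hca'.trans_lt (haρ'.trans_lt hρδ)))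
      (mem_ball_zero_iff.2 (hta.trans_lt (haρ'.trans_lt hρδ)))
    have hPta : ‖t • a + G (t • a)‖ ≤ ρ - 5 / 32 * ((1 - t) * ‖a‖) := by
      have hμA : 0 ≤ (1 - t) * ‖a‖ := mul_nonneg (sub_nonneg.2 ht.2) (norm_nonneg a)
      have hμA' : (1 - t) * ‖a‖ ≤ ‖a‖ :=
        mul_le_of_le_one_left (norm_nonneg a) (by linarith [ht.1])
      refine (sq_le_sq₀ (norm_nonneg _) (by linarith)).1 ?_
      nlinarith [pow_le_pow_left₀ (norm_nonneg _) haρ 2, mul_nonneg hμA (norm_nonneg a)]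
    push_cast at hPc
    nlinarith [norm_le_norm_sub_add (c + G c) (t • a + G (t • a)), norm_nonneg (c - t • a)]

lemma graph_sublevel_subset_ball (hGperp : ∀ c ∈ T, G c ∈ Tᗮ) (hρδ : ρ < δ) :
    {c | c ∈ T ∧ ‖c + G c‖ ≤ ρ} ⊆ ball 0 δ := fun c hc =>
  mem_ball_zero_iff.2 (((norm_le_norm_add_of_mem_orthogonal hc.1 (hGperp c hc.1)).trans
    hc.2).trans_lt hρδ)

lemma norm_map_le_of_mem_graph_sublevel (hGperp : ∀ c ∈ T, G c ∈ Tᗮ)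
    (hG : LipschitzOnWith ε G (ball 0 δ)) (hG0 : G 0 = 0) (hρδ : ρ < δ) {c : E}
    (hc : c ∈ {c | c ∈ T ∧ ‖c + G c‖ ≤ ρ}) : ‖G c‖ ≤ ε * ‖c‖ :=
  hG.norm_le_of_map_zero hG0 (mem_ball_zero_iff.1 (graph_sublevel_subset_ball hGperp hρδ hc))

lemma isLNEWith_graph (hGperp : ∀ c ∈ T, G c ∈ Tᗮ) (hG : LipschitzOnWith ε G (ball 0 δ))
    (hG0 : G 0 = 0) (hε : (ε : ℝ) ≤ 1 / 4) (hρδ : ρ < δ) :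
    IsLNEWith (85 / 3) ((fun c => c + G c) '' {c | c ∈ T ∧ ‖c + G c‖ ≤ ρ}) := by
  have hball := graph_sublevel_subset_ball hGperp hρδ
  have hP : LipschitzOnWith (5 / 4) (fun x => x + G x) {c | c ∈ T ∧ ‖c + G c‖ ≤ ρ} :=
    ((LipschitzWith.id.lipschitzOnWith.add hG).weaken
      (NNReal.coe_le_coe.1 (by push_cast; linarith))).mono hball
  have hP' : ∀ x ∈ {c | c ∈ T ∧ ‖c + G c‖ ≤ ρ}, ∀ y ∈ {c | c ∈ T ∧ ‖c + G c‖ ≤ ρ},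
      dist x y ≤ 4 / 3 * dist (x + G x) (y + G y) := fun x hx y hy => by
    have := hG.mul_norm_sub_le_norm_add_sub (mem_ball_zero_iff.1 (hball hx))
      (mem_ball_zero_iff.1 (hball hy))
    rw [dist_eq_norm, dist_eq_norm]
    nlinarith [norm_nonneg (x - y)]
  rw [show (85 / 3 : ℝ) = ((5 / 4 : ℝ≥0) : ℝ) * (2 / (1 / 8) + 1) * (4 / 3) by norm_num]
  exact ((isMarginStarShaped_graph hGperp hG hG0 hε hρδ).isLNEWith (by norm_num)).image
    (by norm_num) (by norm_num) hP hP'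

lemma graph_inter_closedBall {r : ℝ} (hGperp : ∀ c ∈ T, G c ∈ Tᗮ) (hρr : ρ < r) :
    (fun c => c + G c) '' ((T : Set E) ∩ ball 0 r) ∩ closedBall 0 ρ =
      (fun c => c + G c) '' {c | c ∈ T ∧ ‖c + G c‖ ≤ ρ} := by
  ext x
  constructor
  · rintro ⟨⟨c, ⟨hc, -⟩, rfl⟩, hx⟩
    exact ⟨c, ⟨hc, mem_closedBall_zero_iff.1 hx⟩, rfl⟩
  · rintro ⟨c, ⟨hc, hcρ⟩, rfl⟩
    refine ⟨⟨c, ⟨hc, mem_ball_zero_iff.2 ?_⟩, rfl⟩, mem_closedBall_zero_iff.2 hcρ⟩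
    exact mem_ball_zero_iff.1 (graph_sublevel_subset_ball hGperp hρr ⟨hc, hcρ⟩)

end GraphSheet

lemma isLNEWith_iUnion {M ι : Type*} [PseudoMetricSpace M] {S : ι → Set M} {p : M} {L K : ℝ}
    (hL : 0 ≤ L) (hS : ∀ i, IsLNEWith L (S i)) (hp : ∀ i, p ∈ S i)
    (hsep : ∀ i j, i ≠ j → ∀ x ∈ S i, ∀ y ∈ S j, dist x p + dist p y ≤ K * dist x y) :
    IsLNEWith (L * max 1 K) (⋃ i, S i) := by
  intro x hx y hy
  obtain ⟨i, hxi⟩ := mem_iUnion.1 hx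
  obtain ⟨j, hyj⟩ := mem_iUnion.1 hy
  have hsub : ∀ k, S k ⊆ ⋃ i, S i := subset_iUnion S
  rcases eq_or_ne i j with rfl | hij
  · calc innerDist (⋃ i, S i) x y ≤ innerDist (S i) x y := innerDist_mono (hsub i)
      _ ≤ ENNReal.ofReal (L * dist x y) := hS i hxi hyj
      _ ≤ ENNReal.ofReal (L * max 1 K * dist x y) := by
          gcongr; exact le_mul_of_one_le_right hL (le_max_left 1 K)
  · calc innerDist (⋃ i, S i) x y
        ≤ innerDist (⋃ i, S i) x p + innerDist (⋃ i, S i) p y := innerDist_triangle _ x p y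
      _ ≤ ENNReal.ofReal (L * dist x p) + ENNReal.ofReal (L * dist p y) := by
          gcongr
          · exact (innerDist_mono (hsub i)).trans (hS i hxi (hp i))
          · exact (innerDist_mono (hsub j)).trans (hS j (hp j) hyj)
      _ = ENNReal.ofReal (L * (dist x p + dist p y)) := by
          rw [mul_add, ENNReal.ofReal_add (by positivity) (by positivity)]
      _ ≤ ENNReal.ofReal (L * max 1 K * dist x y) := by
          rw [mul_assoc]
          gcongr
          exact (hsep i j hij x hxi y hyj).trans (by gcongr; exact le_max_right 1 K)

lemma norm_add_norm_le_of_perturbation {E : Type*} [NormedAddCommGroup E] {a b g h : E}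
    {K ε : ℝ} (hK : 0 ≤ K) (hε : 0 ≤ ε) (hKε : K * ε ≤ 1 / 2)
    (hab : ‖a‖ + ‖b‖ ≤ K * ‖a - b‖) (hg : ‖g‖ ≤ ε * ‖a‖) (hh : ‖h‖ ≤ ε * ‖b‖) :
    ‖a + g‖ + ‖b + h‖ ≤ 2 * (1 + ε) * K * ‖(a + g) - (b + h)‖ := by
  have htri : ‖a - b‖ ≤ ‖(a + g) - (b + h)‖ + ‖g‖ + ‖h‖ :=
    calc ‖a - b‖ = ‖((a + g) - (b + h) - g) + h‖ := by congr 1; abel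
      _ ≤ ‖(a + g) - (b + h) - g‖ + ‖h‖ := norm_add_le _ _
      _ ≤ _ := by gcongr; exact norm_sub_le _ _
  have hS : 0 ≤ ‖a‖ + ‖b‖ := by positivity
  have hab' : ‖a‖ + ‖b‖ ≤ 2 * K * ‖(a + g) - (b + h)‖ := by
    nlinarith [mul_le_mul_of_nonneg_left htri hK, mul_le_mul_of_nonneg_left hg hK,
      mul_le_mul_of_nonneg_left hh hK, mul_le_mul_of_nonneg_right hKε hS]
  calc ‖a + g‖ + ‖b + h‖ ≤ (1 + ε) * (‖a‖ + ‖b‖) := by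
        nlinarith [norm_add_le a g, norm_add_le b h]
    _ ≤ 2 * (1 + ε) * K * ‖(a + g) - (b + h)‖ := by
        nlinarith [mul_le_mul_of_nonneg_left hab' (by linarith : (0 : ℝ) ≤ 1 + ε)]

section FiniteDimensional

variable {E : Type*} [NormedAddCommGroup E] [NormedSpace ℝ E] [FiniteDimensional ℝ E]

lemma Submodule.exists_norm_add_norm_le_mul_norm_sub {U V : Submodule ℝ E} (h : U ⊓ V = ⊥) :
    ∃ K : ℝ≥0, ∀ a ∈ U, ∀ b ∈ V, ‖a‖ + ‖b‖ ≤ K * ‖a - b‖ := by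
  set f : U × V →ₗ[ℝ] E := U.subtype.coprod (-V.subtype)
  have hf : ∀ p : U × V, f p = p.1 - p.2 := fun p => by simp [f, sub_eq_add_neg]
  have hker : LinearMap.ker f = ⊥ := by
    refine LinearMap.ker_eq_bot'.2 fun p hp => ?_
    have hp' : (p.1 : E) = p.2 := sub_eq_zero.1 ((hf p).symm.trans hp)
    have h1 : (p.1 : E) ∈ U ⊓ V := ⟨p.1.2, hp' ▸ p.2.2⟩
    rw [h, Submodule.mem_bot] at h1
    ext <;> simp [h1, ← hp']
  obtain ⟨K, -, hK⟩ := f.exists_antilipschitzWith hker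
  refine ⟨2 * K, fun a ha b hb => ?_⟩
  have := hK.le_mul_dist (⟨a, ha⟩, ⟨b, hb⟩) 0
  rw [dist_zero_right, map_zero, dist_zero_right, hf, Prod.norm_mk] at this
  simp only [Submodule.coe_norm] at this
  push_cast
  linarith [le_max_left ‖a‖ ‖b‖, le_max_right ‖a‖ ‖b‖]

lemma exists_forall_norm_add_norm_le_mul_norm_sub {ι : Type*} [Finite ι]
    {T : ι → Submodule ℝ E} (h : ∀ j k, j ≠ k → T j ⊓ T k = ⊥) :
    ∃ K : ℝ≥0, ∀ j k, j ≠ k → ∀ a ∈ T j, ∀ b ∈ T k, ‖a‖ + ‖b‖ ≤ K * ‖a - b‖ := by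
  have hpair : ∀ p : ι × ι, ∃ K : ℝ≥0,
      p.1 ≠ p.2 → ∀ a ∈ T p.1, ∀ b ∈ T p.2, ‖a‖ + ‖b‖ ≤ K * ‖a - b‖ := fun p => by
    by_cases hp : p.1 = p.2
    · exact ⟨0, fun hne => absurd hp hne⟩
    · obtain ⟨K, hK⟩ := Submodule.exists_norm_add_norm_le_mul_norm_sub (h _ _ hp)
      exact ⟨K, fun _ => hK⟩
  choose Kp hKp using hpair
  obtain ⟨K, hK⟩ := Finite.exists_le Kp
  exact ⟨K, fun j k hjk a ha b hb => (hKp (j, k) hjk a ha b hb).trans (by gcongr; exact hK _)⟩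

end FiniteDimensional

lemma exists_forall_lipschitzOnWith_ball {E F ι : Type*} [NormedAddCommGroup E]
    [NormedSpace ℝ E] [NormedAddCommGroup F] [NormedSpace ℝ F] [Finite ι] {G : ι → E → F}
    {x : E} (hG : ∀ i, ContDiff ℝ 1 (G i)) (hG' : ∀ i, fderiv ℝ (G i) x = 0) {ε : ℝ≥0}
    (hε : 0 < ε) : ∃ δ > 0, ∀ i, LipschitzOnWith ε (G i) (ball x δ) := by
  have hsmall : ∀ᶠ y in 𝓝 x, ∀ i, ‖fderiv ℝ (G i) y‖₊ < ε := Filter.eventually_all.2 fun i =>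
    ((hG i).continuous_fderiv one_ne_zero).nnnorm.continuousAt.eventually_lt continuousAt_const
      (by simpa [hG' i] using hε)
  obtain ⟨δ, hδ, hball⟩ := Metric.eventually_nhds_iff_ball.1 hsmall
  exact ⟨δ, hδ, fun i => (convex_ball x δ).lipschitzOnWith_of_nnnorm_fderiv_le
    (fun y _ => ((hG i).differentiable one_ne_zero) y) (fun y hy => (hball y hy i).le)⟩

theorem locallyLNE_of_transverse_general {n s : ℕ}
    (T : Fin s → Submodule ℝ (EuclideanSpace ℝ (Fin n)))
    (r : ℝ) (hr : 0 < r)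
    (G : Fin s → EuclideanSpace ℝ (Fin n) → EuclideanSpace ℝ (Fin n))
    (hGsmooth : ∀ j, ContDiff ℝ 1 (G j))
    (hGperp : ∀ j t, G j t ∈ (T j)ᗮ)
    (hG0 : ∀ j, G j 0 = 0)
    (hDG0 : ∀ j, fderiv ℝ (G j) 0 = 0)
    (N : Fin s → Set (EuclideanSpace ℝ (Fin n)))
    (hN : ∀ j, N j = (fun t => t + G j t) '' ((T j : Set (EuclideanSpace ℝ (Fin n))) ∩ Metric.ball 0 r))
    (Y : Set (EuclideanSpace ℝ (Fin n))) (hY : Y = ⋃ j, N j)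
    (htrans : ∀ j k, j ≠ k → T j ⊓ T k = ⊥) :
    ∃ ρ : ℝ, 0 < ρ ∧ IsLNE (Y ∩ Metric.closedBall 0 ρ) := by
  obtain ⟨K, hK⟩ := exists_forall_norm_add_norm_le_mul_norm_sub htrans
  set ε : ℝ≥0 := (4 * (K + 1))⁻¹
  have hεK : (ε : ℝ) * (4 * (K + 1)) = 1 := by simp only [ε]; push_cast; field_simp
  have hε0 : 0 < ε := by positivity
  have hε4 : (ε : ℝ) ≤ 1 / 4 := by nlinarith [ε.coe_nonneg, K.coe_nonneg]
  have hKε : (K : ℝ) * ε ≤ 1 / 2 := by nlinarith [ε.coe_nonneg, K.coe_nonneg]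
  obtain ⟨δ, hδ, hGlip⟩ := exists_forall_lipschitzOnWith_ball hGsmooth hDG0 hε0
  obtain ⟨ρ, hρ, hρδ, hρr⟩ : ∃ ρ, 0 < ρ ∧ ρ < δ ∧ ρ < r :=
    ⟨min δ r / 2, by positivity, by linarith [min_le_left δ r], by linarith [min_le_right δ r]⟩
  have hGperp' : ∀ j, ∀ c ∈ T j, G j c ∈ (T j)ᗮ := fun j c _ => hGperp j c
  refine ⟨ρ, hρ, 85 / 3 * max 1 (2 * (1 + ε) * K),
    one_le_mul_of_one_le_of_one_le (by norm_num) (le_max_left _ _), ?_⟩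
  rw [hY, iUnion_inter]
  simp_rw [hN, graph_inter_closedBall (hGperp' _) hρr]
  refine isLNEWith_iUnion (p := 0) (by norm_num)
    (fun j => isLNEWith_graph (hGperp' j) (hGlip j) (hG0 j) hε4 hρδ)
    (fun j => ⟨0, ⟨zero_mem _, by simp [hG0, hρ.le]⟩, by simp [hG0]⟩) ?_
  rintro j k hjk _ ⟨a, ha, rfl⟩ _ ⟨b, hb, rfl⟩
  rw [dist_zero_right, dist_zero_left, dist_eq_norm]
  exact norm_add_norm_le_of_perturbation K.coe_nonneg ε.coe_nonneg hKε (hK j k hjk a ha.1 b hb.1)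
    (norm_map_le_of_mem_graph_sublevel (hGperp' j) (hGlip j) (hG0 j) hρδ ha)
    (norm_map_le_of_mem_graph_sublevel (hGperp' k) (hGlip k) (hG0 k) hρδ hb)

/-- a union of C¹ graph germs over pairwise transverse tangent spaces,
with an isolated singularity at the origin, is locally LNE at 0. -/
theorem locallyLNE_of_transverse {n s : ℕ}
    (T : Fin s → Submodule ℝ (EuclideanSpace ℝ (Fin n)))
    (hTdim : ∀ j, T j ≠ ⊥ ∧ T j ≠ ⊤)
    (r : ℝ) (hr : 0 < r)
    (G : Fin s → EuclideanSpace ℝ (Fin n) → EuclideanSpace ℝ (Fin n))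
    (hGsmooth : ∀ j, ContDiff ℝ 1 (G j))
    (hGperp : ∀ j t, G j t ∈ (T j)ᗮ)
    (hG0 : ∀ j, G j 0 = 0)
    (hDG0 : ∀ j, fderiv ℝ (G j) 0 = 0)
    (N : Fin s → Set (EuclideanSpace ℝ (Fin n)))
    (hN : ∀ j, N j = (fun t => t + G j t) '' ((T j : Set (EuclideanSpace ℝ (Fin n))) ∩ Metric.ball 0 r))
    (hiso : ∀ j k, j ≠ k → N j ∩ N k ⊆ {0})
    (Y : Set (EuclideanSpace ℝ (Fin n))) (hY : Y = ⋃ j, N j)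
    (htrans : ∀ j k, j ≠ k → T j ⊓ T k = ⊥) :
    ∃ ρ : ℝ, 0 < ρ ∧ IsLNE (Y ∩ Metric.closedBall 0 ρ) :=
  locallyLNE_of_transverse_general T r hr G hGsmooth hGperp hG0 hDG0 N hN Y hY htrans
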